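/- arXiv:1701.01040 — 10 statements merged into one kernel-verified Lean document; each statement's English description precedes it below -/
import Mathlib

section
/- Let k be a field, fix a monomial order ⪯ on the exponent vectors ℕⁿ, and let I be an ideal of the polynomial ring k[x₁,…,xₙ]. Then the residue classes in the quotient ring k[x₁,…,xₙ]/I of the monomials x^a, where a ranges over all exponent vectors in ℕⁿ that are NOT the leading exponent (with respect to ⪯) of any nonzero element of I, form a basis of k[x₁,…,xₙ]/I as a k-vector space. -/
/-!
A linear order on `σ →₀ ℕ` that is compatible with addition and has `0` as least element extends
the pointwise order, so by Dickson's lemma it is a well-order, i.e. a `MonomialOrder`. Dividing a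
polynomial by all nonzero elements of `I` (their leading coefficients are units) leaves a
remainder none of whose exponents is a leading exponent of `I`, so the polynomials supported on
the standard exponents surject onto the quotient. Conversely a nonzero such polynomial is not in
`I`, because its leading exponent is standard. Hence the quotient map is a linear isomorphism
from these polynomials onto `k[x] ⧸ I`, and it carries the monomial basis to the residue classes
of the standard monomials.
-/

open MvPolynomial

/-- A copy of `α` ordered by `r`, to serve as the `syn` of a `MonomialOrder`. -/
def RelOrder {α : Type*} (_r : α → α → Prop) : Type _ := α

namespace RelOrder

variable {α : Type*} (r : α → α → Prop)

instance [AddCommMonoid α] : AddCommMonoid (RelOrder r) := inferInstanceAs (AddCommMonoid α)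

noncomputable instance [IsLinearOrder α r] : LinearOrder (RelOrder r) where
  le := r
  le_refl := refl_of r
  le_trans _ _ _ := trans_of r
  le_antisymm _ _ := antisymm_of r
  le_total := total_of r
  toDecidableLE := Classical.decRel _

def toRelOrder [AddCommMonoid α] : α ≃+ RelOrder r := AddEquiv.refl α

theorem toRelOrder_le_toRelOrder_iff [AddCommMonoid α] [IsLinearOrder α r] {a b : α} :
    toRelOrder r a ≤ toRelOrder r b ↔ r a b := Iff.rfl

end RelOrder

theorem MvPolynomial.coe_basisRestrictSupport_apply {σ R : Type*} [CommSemiring R]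
    (s : Set (σ →₀ ℕ)) (a : s) :
    (basisRestrictSupport R s a : MvPolynomial σ R) = monomial a 1 := by
  classical
  have : basisRestrictSupport R s a = ⟨monomial a 1, by simp⟩ := by
    rw [Module.Basis.apply_eq_iff]
    ext b
    rw [Finsupp.single_apply]
    change coeff b (monomial (a : σ →₀ ℕ) (1 : R)) = _
    simp [coeff_monomial, Subtype.ext_iff]
  rw [this]

namespace MonomialOrder

open RelOrder

variable {σ : Type*}

noncomputable def ofRel [Finite σ] (r : (σ →₀ ℕ) → (σ →₀ ℕ) → Prop) [IsLinearOrder (σ →₀ ℕ) r]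
    (hadd : ∀ a b c, r a b → r (a + c) (b + c)) (hzero : ∀ a, r 0 a) : MonomialOrder σ :=
  have hmono : Monotone (toRelOrder r) := fun a b hab => by
    rw [toRelOrder_le_toRelOrder_iff]
    simpa [add_tsub_cancel_of_le hab, add_comm] using hadd 0 (b - a) a (hzero _)
  { syn := RelOrder r
    isOrderedAddMonoid_syn := { add_le_add_left := fun a b h c => hadd a b c h }
    toSyn := toRelOrder r
    toSyn_monotone := hmono
    wellFoundedLT_syn := Set.isWF_univ_iff.mp <| by
      simpa [Set.image_univ_of_surjective (toRelOrder r).surjective] using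
        ((Set.isPWO_of_wellQuasiOrderedLE Set.univ).image_of_monotone hmono).isWF }

variable {R : Type*} [CommSemiring R] (m : MonomialOrder σ)

theorem degree_eq_iff {f : MvPolynomial σ R} (hf : f ≠ 0) {a : σ →₀ ℕ} :
    m.degree f = a ↔ a ∈ f.support ∧ ∀ c ∈ f.support, c ≼[m] a := by
  constructor
  · rintro rfl
    exact ⟨(m.degree_mem_support_iff f).mpr hf, fun c => m.le_degree⟩
  · rintro ⟨ha, hmax⟩
    exact m.toSyn.injective (le_antisymm (m.degree_le_iff.mpr hmax) (m.le_degree ha))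

def standardExponents (I : Ideal (MvPolynomial σ R)) : Set (σ →₀ ℕ) :=
  {a | ¬ ∃ f ∈ I, f ≠ 0 ∧ m.degree f = a}

theorem eq_zero_of_mem_restrictSupport_standardExponents {I : Ideal (MvPolynomial σ R)}
    {f : MvPolynomial σ R} (hfS : f ∈ restrictSupport R (m.standardExponents I)) (hfI : f ∈ I) :
    f = 0 := by
  by_contra hf
  exact hfS ((m.degree_mem_support_iff f).mpr hf) ⟨f, hfI, hf, rfl⟩

theorem exists_mem_restrictSupport_standardExponents {k : Type*} [Field k]
    (I : Ideal (MvPolynomial σ k)) (f : MvPolynomial σ k) :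
    ∃ r ∈ restrictSupport k (m.standardExponents I), f - r ∈ I := by
  obtain ⟨g, r, rfl, -, hr⟩ := m.div_set (B := (I : Set _) \ {0})
    (fun b hb => (m.leadingCoeff_ne_zero_iff.mpr hb.2).isUnit) f
  refine ⟨r, fun c hc ⟨p, hpI, hp0, hpc⟩ => hr c hc p ⟨hpI, hp0⟩ hpc.le, ?_⟩
  rw [add_sub_cancel_right]
  have hspan : Submodule.span (MvPolynomial σ k)
      (Set.range fun b : ((I : Set (MvPolynomial σ k)) \ {0} : Set _) => b.1) ≤ I :=
    Submodule.span_le.mpr (Set.range_subset_iff.mpr fun b => b.2.1)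
  apply hspan
  rw [← Finsupp.range_linearCombination]
  exact LinearMap.mem_range_self _ g

variable {k : Type*} [Field k] (I : Ideal (MvPolynomial σ k))

noncomputable def restrictSupportEquivQuotient :
    restrictSupport k (m.standardExponents I) ≃ₗ[k] MvPolynomial σ k ⧸ I :=
  .ofBijective ((Ideal.Quotient.mkₐ k I).toLinearMap ∘ₗ (restrictSupport k _).subtype) <| by
    refine ⟨(injective_iff_map_eq_zero _).mpr fun f hf => ?_, fun x => ?_⟩
    · exact Subtype.ext <|
        m.eq_zero_of_mem_restrictSupport_standardExponents f.2 (Ideal.Quotient.eq_zero_iff_mem.mp hf)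
    · obtain ⟨f, rfl⟩ := Ideal.Quotient.mk_surjective x
      obtain ⟨r, hr, hfr⟩ := m.exists_mem_restrictSupport_standardExponents I f
      exact ⟨⟨r, hr⟩, (Ideal.Quotient.eq.mpr hfr).symm⟩

noncomputable def quotientBasis : Module.Basis (m.standardExponents I) k (MvPolynomial σ k ⧸ I) :=
  (basisRestrictSupport k _).map (m.restrictSupportEquivQuotient I)

theorem quotientBasis_apply (a : m.standardExponents I) :
    m.quotientBasis I a = Ideal.Quotient.mk I (monomial a 1) := by
  rw [quotientBasis, Module.Basis.map_apply, ← coe_basisRestrictSupport_apply]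
  rfl

end MonomialOrder

/-- **Monomial basis of the quotient ring.**
Let `k` be a field, fix a monomial order `le` on exponent vectors `Fin n →₀ ℕ`
(a linear order compatible with addition, with `0` as least element), and let `I`
be an ideal of `k[x₁,…,xₙ]`. The residue classes of the monomials `x^a`, where `a`
ranges over exponent vectors that are not the leading exponent of any nonzero
element of `I`, form a `k`-basis of the quotient ring. -/
theorem quotient_basis_of_non_leading_exponents
    {k : Type*} [Field k] {n : ℕ}
    (le : (Fin n →₀ ℕ) → (Fin n →₀ ℕ) → Prop)
    (hlin : IsLinearOrder (Fin n →₀ ℕ) le)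
    (hadd : ∀ a b c : Fin n →₀ ℕ, le a b → le (a + c) (b + c))
    (hzero : ∀ a : Fin n →₀ ℕ, le 0 a)
    (I : Ideal (MvPolynomial (Fin n) k)) :
    ∃ b : Module.Basis {a : Fin n →₀ ℕ //
        ¬ ∃ f ∈ I, f ≠ 0 ∧ a ∈ f.support ∧ ∀ c ∈ f.support, le c a}
        k (MvPolynomial (Fin n) k ⧸ I),
      ∀ a, b a = Ideal.Quotient.mk I (monomial a.1 (1 : k)) := by
  let m := MonomialOrder.ofRel le hadd hzero
  have hstd (a : Fin n →₀ ℕ) :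
      (¬ ∃ f ∈ I, f ≠ 0 ∧ a ∈ f.support ∧ ∀ c ∈ f.support, le c a) ↔ a ∈ m.standardExponents I :=
    not_congr <| exists_congr fun f => and_congr_right fun _ => and_congr_right fun hf =>
      (m.degree_eq_iff hf).symm
  refine ⟨(m.quotientBasis I).reindex (Equiv.subtypeEquivRight hstd).symm, fun a => ?_⟩
  rw [Module.Basis.reindex_apply, MonomialOrder.quotientBasis_apply]
  rfl
end

section
/- Let k be a field and let I be an ideal of the polynomial ring k[x₁,…,xₙ] such that the quotient ring k[x₁,…,xₙ]/I is a finite-dimensional k-vector space. Then the zero locus of I in kⁿ, i.e. the set { p ∈ kⁿ : f(p) = 0 for every f ∈ I }, is a finite set. -/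
open MvPolynomial

/-! Each point `p` of the zero locus of `I` gives a `k`-algebra map `k[x]/I → k`, evaluation at
`p`, from which `p` is recovered as the image of the coordinates. A finite-dimensional algebra
over a field has only finitely many algebra maps to that field (they are linearly independent). -/

namespace MvPolynomial

variable {σ R : Type*} [CommRing R] (I : Ideal (MvPolynomial σ R))

noncomputable def quotientEvalOfMemZeroLocus (p : {p : σ → R | ∀ f ∈ I, eval p f = 0}) :
    MvPolynomial σ R ⧸ I →ₐ[R] R :=
  Ideal.Quotient.liftₐ I (aeval p.1) fun f hf => by
    rw [aeval_eq_eval]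
    exact p.2 f hf

theorem quotientEvalOfMemZeroLocus_mk_X (p : {p : σ → R | ∀ f ∈ I, eval p f = 0}) (i : σ) :
    quotientEvalOfMemZeroLocus I p (Ideal.Quotient.mk I (X i)) = p.1 i :=
  aeval_X _ _

theorem quotientEvalOfMemZeroLocus_injective :
    Function.Injective (quotientEvalOfMemZeroLocus I) := by
  intro p q hpq
  ext i
  simpa only [quotientEvalOfMemZeroLocus_mk_X] using
    DFunLike.congr_fun hpq (Ideal.Quotient.mk I (X i))

theorem zeroLocus_finite_of_finite_algHom [Finite (MvPolynomial σ R ⧸ I →ₐ[R] R)] :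
    {p : σ → R | ∀ f ∈ I, eval p f = 0}.Finite :=
  Set.finite_coe_iff.mp (Finite.of_injective _ (quotientEvalOfMemZeroLocus_injective I))

end MvPolynomial

/-- If the quotient `k[x₁,…,xₙ]/I` is a finite-dimensional `k`-vector space,
then the zero locus of `I` in `kⁿ` is finite. -/
theorem zeroLocus_finite_of_finiteDimensional_quotient
    {k : Type*} [Field k] {n : ℕ} (I : Ideal (MvPolynomial (Fin n) k))
    (h : FiniteDimensional k (MvPolynomial (Fin n) k ⧸ I)) :
    {p : Fin n → k | ∀ f ∈ I, eval p f = 0}.Finite := by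
  have : Finite (MvPolynomial (Fin n) k ⧸ I →ₐ[k] k) := Finite.algHom k _ k
  exact zeroLocus_finite_of_finite_algHom I
end

section
/- Let k be an algebraically closed field and let I be an ideal of the polynomial ring k[x₁,…,xₙ] whose zero locus in kⁿ is a finite set. Then the quotient ring k[x₁,…,xₙ]/I is a finite-dimensional k-vector space. -/
open MvPolynomial

/-- Over an algebraically closed field, if the zero locus of an ideal
`I ⊆ k[x₁,…,xₙ]` in `kⁿ` is finite, then the quotient `k[x₁,…,xₙ]/I`
is a finite-dimensional `k`-vector space. -/
theorem finiteDimensional_quotient_of_zeroLocus_finite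
    {k : Type*} [Field k] [IsAlgClosed k] {n : ℕ}
    (I : Ideal (MvPolynomial (Fin n) k))
    (h : {p : Fin n → k | ∀ f ∈ I, eval p f = 0}.Finite) :
    FiniteDimensional k (MvPolynomial (Fin n) k ⧸ I) := by
  -- each generator is integral over k in the quotient
  have hint : ∀ i : Fin n, IsIntegral k (Ideal.Quotient.mk I (X i)) := by
    intro i
    set g : Polynomial k := ∏ p ∈ h.toFinset, (Polynomial.X - Polynomial.C (p i)) with hg
    have hgmonic : g.Monic := Polynomial.monic_prod_of_monic _ _ fun p _ =>
      Polynomial.monic_X_sub_C _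
    have hmem : Polynomial.aeval (X i : MvPolynomial (Fin n) k) g ∈ I.radical := by
      rw [← vanishingIdeal_zeroLocus_eq_radical (K := k), mem_vanishingIdeal_iff]
      intro x hx
      have hx' : x ∈ h.toFinset := h.mem_toFinset.mpr hx
      rw [hg, map_prod, map_prod]
      refine Finset.prod_eq_zero hx' ?_
      simp
    obtain ⟨m, hm⟩ := hmem
    refine ⟨g ^ m, hgmonic.pow m, ?_⟩
    have key : Polynomial.aeval (Ideal.Quotient.mkₐ k I (X i)) (g ^ m)
        = Ideal.Quotient.mkₐ k I (Polynomial.aeval (X i : MvPolynomial (Fin n) k) (g ^ m)) :=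
      Polynomial.aeval_algHom_apply _ _ _
    rw [Ideal.Quotient.mkₐ_eq_mk] at key
    show Polynomial.aeval (Ideal.Quotient.mk I (X i : MvPolynomial (Fin n) k)) (g ^ m) = 0
    rw [key, map_pow, Ideal.Quotient.eq_zero_iff_mem]
    exact hm
  -- the images of the variables generate the quotient as a k-algebra
  have hadj : Algebra.adjoin k
      (Set.range fun i => Ideal.Quotient.mk I (X i : MvPolynomial (Fin n) k)) = ⊤ := by
    have hr : (Set.range fun i => Ideal.Quotient.mk I (X i : MvPolynomial (Fin n) k))
        = (Ideal.Quotient.mkₐ k I) '' (Set.range X) := by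
      rw [← Set.range_comp]; rfl
    rw [hr, ← AlgHom.map_adjoin, MvPolynomial.adjoin_range_X, Algebra.map_top]
    exact (AlgHom.range_eq_top _).mpr (Ideal.Quotient.mkₐ_surjective k I)
  have hfg : (Algebra.adjoin k
      (Set.range fun i => Ideal.Quotient.mk I (X i : MvPolynomial (Fin n) k))).toSubmodule.FG :=
    fg_adjoin_of_finite (Set.finite_range _) (by rintro _ ⟨i, rfl⟩; exact hint i)
  rw [hadj] at hfg
  have : Module.Finite k (MvPolynomial (Fin n) k ⧸ I) := ⟨by simpa using hfg⟩
  exact this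
end

section
/- Let k be an algebraically closed field and let I be an ideal of k[x₁,…,xₙ] such that the quotient ring Q = k[x₁,…,xₙ]/I is a finite-dimensional k-vector space. Fix f ∈ k[x₁,…,xₙ] and let M_f : Q → Q be the k-linear map given by multiplication by the residue class of f. Then a scalar λ ∈ k is an eigenvalue of M_f if and only if there exists a point p in the zero locus of I in kⁿ with f(p) = λ. -/
open MvPolynomial

set_option maxHeartbeats 1000000
set_option synthInstance.maxHeartbeats 400000

/-- **Eigenvalues of multiplication operators on the quotient ring.**
Let `k` be algebraically closed, `I ⊆ k[x₁,…,xₙ]` an ideal with finite-dimensional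
quotient `Q`, and `f` a polynomial. Then `lam` is an eigenvalue of the multiplication
map `M_f : Q → Q` (i.e. there is a nonzero `v` with `f·v = lam • v`) if and only if
there is a point `p` of the zero locus of `I` with `f(p) = lam`. -/
theorem eigenvalue_mul_iff_exists_point
    {k : Type*} [Field k] [IsAlgClosed k] {n : ℕ}
    (I : Ideal (MvPolynomial (Fin n) k))
    (hfin : FiniteDimensional k (MvPolynomial (Fin n) k ⧸ I))
    (f : MvPolynomial (Fin n) k) (lam : k) :
    (∃ v : MvPolynomial (Fin n) k ⧸ I, v ≠ 0 ∧
        Ideal.Quotient.mk I f * v = lam • v) ↔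
      ∃ p : Fin n → k, (∀ g ∈ I, eval p g = 0) ∧ eval p f = lam := by
  set q : MvPolynomial (Fin n) k ⧸ I := Ideal.Quotient.mk I (f - C lam) with hq_def
  have hsmul : ∀ v : MvPolynomial (Fin n) k ⧸ I,
      lam • v = Ideal.Quotient.mk I (C lam) * v := by
    intro v
    obtain ⟨g, rfl⟩ := Ideal.Quotient.mk_surjective v
    rw [← map_mul, ← MvPolynomial.smul_eq_C_mul]
    exact (map_smul (Ideal.Quotient.mkₐ k I) lam g).symm
  have hiff : ∀ v : MvPolynomial (Fin n) k ⧸ I,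
      (Ideal.Quotient.mk I f * v = lam • v) ↔ q * v = 0 := by
    intro v
    rw [hq_def, map_sub, sub_mul, sub_eq_zero, hsmul]
  constructor
  · rintro ⟨v, hv, hfv⟩
    have hq0 : q * v = 0 := (hiff v).1 hfv
    have hnu : ¬ IsUnit q := fun h => hv ((h.mul_right_eq_zero).1 hq0)
    have : Nontrivial (MvPolynomial (Fin n) k ⧸ I) := nontrivial_of_ne v 0 hv
    obtain ⟨M, hM, hqM⟩ := exists_max_ideal_of_mem_nonunits (mem_nonunits_iff.2 hnu)
    set J := M.comap (Ideal.Quotient.mk I) with hJ_def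
    have hJmax : J.IsMaximal :=
      Ideal.comap_isMaximal_of_surjective _ Ideal.Quotient.mk_surjective
    obtain ⟨p, hp⟩ := (isMaximal_iff_eq_vanishingIdeal_singleton (I := J)).1 hJmax
    refine ⟨p, ?_, ?_⟩
    · intro g hg
      have hgJ : g ∈ J := by
        show Ideal.Quotient.mk I g ∈ M
        rw [Ideal.Quotient.eq_zero_iff_mem.2 hg]
        exact M.zero_mem
      rw [hp] at hgJ
      exact (mem_vanishingIdeal_singleton_iff p g).1 hgJ
    · have hfJ : f - C lam ∈ J := hqM
      rw [hp, mem_vanishingIdeal_singleton_iff] at hfJ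
      simpa [sub_eq_zero] using hfJ
  · rintro ⟨p, hpI, hpf⟩
    have hItop : I ≠ ⊤ := by
      intro h
      have := hpI 1 (h ▸ Submodule.mem_top)
      simp at this
    have : Nontrivial (MvPolynomial (Fin n) k ⧸ I) := Ideal.Quotient.nontrivial_iff.mpr hItop
    have hnu : ¬ IsUnit q := by
      intro h
      obtain ⟨u, hu⟩ := h
      obtain ⟨r, hr⟩ := Ideal.Quotient.mk_surjective (↑u⁻¹ : MvPolynomial (Fin n) k ⧸ I)
      have hmul : Ideal.Quotient.mk I ((f - C lam) * r - 1) = 0 := by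
        rw [map_sub, map_mul, hr, ← hq_def, ← hu, map_one, Units.mul_inv, sub_self]
      have hmem : (f - C lam) * r - 1 ∈ I := Ideal.Quotient.eq_zero_iff_mem.1 hmul
      have := hpI _ hmem
      simp [hpf] at this
    have hninj : ¬ Function.Injective (LinearMap.mulLeft k q) := by
      intro hinj
      have hsurj := (LinearMap.injective_iff_surjective (f := LinearMap.mulLeft k q)).1 hinj
      obtain ⟨r, hr⟩ := hsurj 1
      exact hnu (IsUnit.of_mul_eq_one (a := q) r (by simpa using hr))
    have hker : LinearMap.ker (LinearMap.mulLeft k q) ≠ ⊥ :=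
      fun h => hninj (LinearMap.ker_eq_bot.1 h)
    obtain ⟨v, hv, hv0⟩ := Submodule.exists_mem_ne_zero_of_ne_bot hker
    refine ⟨v, hv0, (hiff v).2 ?_⟩
    simpa using (LinearMap.mem_ker.1 hv)
end

section
/- Let k be a field, let p₁,…,p_m be pairwise distinct points of kⁿ, let m_i ⊆ k[x₁,…,xₙ] be the ideal of all polynomials vanishing at p_i, and set M = m₁ ∩ ⋯ ∩ m_m. Let I be an ideal of k[x₁,…,xₙ] and let δ ≥ 1 be a natural number with M^δ ⊆ I. Let L₁,…,L_m ∈ k[x₁,…,xₙ] satisfy L_i(p_k) = 1 if i = k and L_i(p_k) = 0 if i ≠ k, and define e_i = 1 − (1 − L_i^δ)^δ. Then: (i) e₁ + ⋯ + e_m − 1 ∈ I; (ii) for all i, j, e_i·e_j − δ_{ij}·e_i ∈ I (where δ_{ij} = 1 if i = j and 0 otherwise); and (iii) e_i(p_k) = 1 if i = k and e_i(p_k) = 0 if i ≠ k. -/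
/-!
A polynomial vanishing at every `p i` lies in `M`, so its `δ`-th power lies in `I`. Since
`L i (p k)` is `0` or `1`, the polynomials `L i - L i ^ 2`, `L i * L j` (`i ≠ j`) and
`∏ i, (1 - L i)` vanish at every point. Hence in `k[x₁,…,xₙ] ⧸ I` the classes of the `L i` are
orthogonal idempotents summing to `1` up to nilpotents of order `δ`, and `x ↦ 1 - (1 - x ^ δ) ^ δ`
corrects such a family to complete orthogonal idempotents.
-/

open MvPolynomial

theorem IsIdempotentElem.one_sub_one_sub_pow_pow {R : Type*} [Ring R] {x : R}
    (hx : IsIdempotentElem x) {n : ℕ} (hn : n ≠ 0) : 1 - (1 - x ^ n) ^ n = x := by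
  rw [hx.pow_eq hn, hx.one_sub.pow_eq hn, sub_sub_cancel]

theorem pow_dvd_one_sub_one_sub_pow_pow {R : Type*} [CommRing R] (x : R) (n : ℕ) :
    x ^ n ∣ 1 - (1 - x ^ n) ^ n := by
  simpa only [sub_sub_cancel] using one_sub_dvd_one_sub_pow (1 - x ^ n) n

theorem completeOrthogonalIdempotents_one_sub_one_sub_pow_pow {R ι : Type*} [CommRing R]
    [Fintype ι] {x : ι → R} {n : ℕ} (hidem : ∀ i, (x i - x i ^ 2) ^ n = 0)
    (hortho : Pairwise fun i j ↦ (x i * x j) ^ n = 0) (hcomplete : (∏ i, (1 - x i)) ^ n = 0) :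
    CompleteOrthogonalIdempotents fun i ↦ 1 - (1 - x i ^ n) ^ n := by
  refine .of_prod_one_sub ⟨fun i ↦ isIdempotentElem_one_sub_one_sub_pow_pow _ _ (hidem i),
    fun i j hij ↦ ?_⟩ ?_
  · obtain ⟨a, ha⟩ := pow_dvd_one_sub_one_sub_pow_pow (x i) n
    obtain ⟨b, hb⟩ := pow_dvd_one_sub_one_sub_pow_pow (x j) n
    rw [ha, hb, mul_mul_mul_comm, ← mul_pow, hortho hij, zero_mul]
  · have hdvd : (∏ i, (1 - x i)) ^ n ∣ ∏ i, (1 - (1 - (1 - x i ^ n) ^ n)) := by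
      simp only [sub_sub_cancel, Finset.prod_pow]
      exact pow_dvd_pow_of_dvd (Finset.prod_dvd_prod_of_dvd _ _ fun i _ ↦
        one_sub_dvd_one_sub_pow (x i) n) n
    rwa [hcomplete, zero_dvd_iff] at hdvd

theorem Ideal.completeOrthogonalIdempotents_mk_one_sub_one_sub_pow_pow {R ι : Type*}
    [CommRing R] [Fintype ι] {I J : Ideal R} {n : ℕ} (hJ : J ^ n ≤ I) {x : ι → R}
    (hidem : ∀ i, x i - x i ^ 2 ∈ J) (hortho : Pairwise fun i j ↦ x i * x j ∈ J)
    (hcomplete : ∏ i, (1 - x i) ∈ J) :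
    CompleteOrthogonalIdempotents fun i ↦ Ideal.Quotient.mk I (1 - (1 - x i ^ n) ^ n) := by
  have hnil : ∀ g ∈ J, Ideal.Quotient.mk I g ^ n = 0 := fun g hg ↦ by
    rw [← map_pow, Ideal.Quotient.eq_zero_iff_mem]
    exact hJ (Ideal.pow_mem_pow hg n)
  simp only [map_sub, map_one, map_pow]
  refine completeOrthogonalIdempotents_one_sub_one_sub_pow_pow (fun i ↦ ?_)
    (fun i j hij ↦ ?_) ?_
  · simpa only [map_sub, map_pow] using hnil _ (hidem i)
  · simpa only [map_mul] using hnil _ (hortho hij)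
  · simpa only [map_prod, map_sub, map_one] using hnil _ hcomplete

theorem partition_of_unity_polynomials_general
    {k : Type*} [Field k] {n m : ℕ}
    (p : Fin m → (Fin n → k))
    (I : Ideal (MvPolynomial (Fin n) k)) (δ : ℕ) (hδ : 1 ≤ δ)
    (hM : (⨅ i, RingHom.ker (eval (p i))) ^ δ ≤ I)
    (L : Fin m → MvPolynomial (Fin n) k)
    (hL : ∀ i k', eval (p k') (L i) = if i = k' then 1 else 0)
    (e : Fin m → MvPolynomial (Fin n) k)
    (he : ∀ i, e i = 1 - (1 - L i ^ δ) ^ δ) :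
    ((∑ i, e i) - 1 ∈ I) ∧
    (∀ i j, e i * e j - (if i = j then e i else 0) ∈ I) ∧
    (∀ i k', eval (p k') (e i) = if i = k' then 1 else 0) := by
  have mem_M : ∀ g, (∀ k', eval (p k') g = 0) → g ∈ ⨅ i, RingHom.ker (eval (p i)) :=
    fun g hg ↦ by simpa only [Ideal.mem_iInf, RingHom.mem_ker] using hg
  have hcoi : CompleteOrthogonalIdempotents (Ideal.Quotient.mk I ∘ e) := by
    simp only [Function.comp_def, he]
    refine Ideal.completeOrthogonalIdempotents_mk_one_sub_one_sub_pow_pow hM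
      (fun i ↦ mem_M _ fun k' ↦ ?_) (fun i j hij ↦ mem_M _ fun k' ↦ ?_) (mem_M _ fun k' ↦ ?_)
    · simp only [map_sub, map_pow, hL]
      split_ifs <;> simp
    · simp only [map_mul, hL]
      split_ifs <;> simp_all
    · simp only [map_prod, map_sub, map_one, hL]
      exact Finset.prod_eq_zero (Finset.mem_univ k') (by simp)
  refine ⟨?_, fun i j ↦ ?_, fun i k' ↦ ?_⟩
  · rw [← Ideal.Quotient.eq_zero_iff_mem, map_sub, map_sum, map_one]
    exact sub_eq_zero.2 hcoi.complete
  · rw [← Ideal.Quotient.eq_zero_iff_mem, map_sub, map_mul, apply_ite (Ideal.Quotient.mk I), map_zero]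
    exact sub_eq_zero.2 (hcoi.mul_eq i j)
  · have hidem : IsIdempotentElem (if i = k' then (1 : k) else 0) := by
      split_ifs <;> simp [IsIdempotentElem]
    rw [he, map_sub, map_one, map_pow, map_sub, map_one, map_pow, hL]
    exact hidem.one_sub_one_sub_pow_pow (by omega)

/-- **Partition-of-unity polynomials.**
Let `p 1, …, p m` be pairwise distinct points of `kⁿ`, `m_i` the vanishing ideal of
`p i`, and `M = m₁ ∩ ⋯ ∩ m_m`. Let `I` be an ideal and `δ ≥ 1` with `M^δ ⊆ I`.
If `L i (p k') = δ_{i k'}` and `e i = 1 − (1 − (L i)^δ)^δ`, then the `e i` form a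
partition of unity modulo `I` and satisfy `e i (p k') = δ_{i k'}`. -/
theorem partition_of_unity_polynomials
    {k : Type*} [Field k] {n m : ℕ}
    (p : Fin m → (Fin n → k)) (hp : Function.Injective p)
    (I : Ideal (MvPolynomial (Fin n) k)) (δ : ℕ) (hδ : 1 ≤ δ)
    (hM : (⨅ i, RingHom.ker (eval (p i))) ^ δ ≤ I)
    (L : Fin m → MvPolynomial (Fin n) k)
    (hL : ∀ i k', eval (p k') (L i) = if i = k' then 1 else 0)
    (e : Fin m → MvPolynomial (Fin n) k)
    (he : ∀ i, e i = 1 - (1 - L i ^ δ) ^ δ) :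
    ((∑ i, e i) - 1 ∈ I) ∧
    (∀ i j, e i * e j - (if i = j then e i else 0) ∈ I) ∧
    (∀ i k', eval (p k') (e i) = if i = k' then 1 else 0) :=
  partition_of_unity_polynomials_general p I δ hδ hM L hL e he
end

section
/- Let P and Q be polynomials with complex coefficients such that Q is nonzero and squarefree, and such that either P = 0 or deg P ≤ deg Q − 2. Then the sum over the (distinct) complex roots r of Q of P(r)/Q′(r) equals zero, where Q′ denotes the derivative of Q. (In particular, since Q is squarefree, Q′(r) ≠ 0 at every root r of Q.) -/
open Polynomial

/-! Writing `Q = c ∏ (X - r)` over its distinct roots gives `Q'(r) = c ∏_{r' ≠ r} (r - r')`, so the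
sum is `c⁻¹` times the Lagrange formula `∑ P(r) / ∏_{r' ≠ r} (r - r')` for the coefficient of
`X ^ (deg Q - 1)` in the interpolant of `P` on the roots of `Q`, which is `P` itself; that
coefficient vanishes because `deg P < deg Q - 1`. -/

theorem Lagrange.sum_eval_div_prod_sub_eq_zero {F ι : Type*} [Field F] [DecidableEq ι]
    {s : Finset ι} {v : ι → F} (hvs : Set.InjOn v s) {P : F[X]} (hP : P.natDegree + 1 < s.card) :
    ∑ i ∈ s, P.eval (v i) / ∏ j ∈ s.erase i, (v i - v j) = 0 := by
  rw [← Lagrange.coeff_eq_sum hvs ((degree_le_natDegree).trans_lt (by exact_mod_cast (by omega)))]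
  exact coeff_eq_zero_of_natDegree_lt (by omega)

theorem Polynomial.Splits.eval_derivative_of_mem_roots {R : Type*} [CommRing R] [IsDomain R]
    [DecidableEq R] {f : R[X]} (hf : f.Splits) {x : R} (hx : x ∈ f.roots) :
    f.derivative.eval x = f.leadingCoeff * ((f.roots.erase x).map (x - ·)).prod := by
  conv_lhs => rw [hf.eq_prod_roots]
  rw [derivative_C_mul, eval_C_mul, eval_multiset_prod_X_sub_C_derivative hx]

theorem Polynomial.Splits.sum_eval_div_eval_derivative_eq_zero {F : Type*} [Field F]
    [DecidableEq F] {P Q : F[X]} (hQ : Q.Splits) (hnd : Q.roots.Nodup)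
    (hdeg : P.natDegree + 2 ≤ Q.natDegree) :
    ∑ r ∈ Q.roots.toFinset, P.eval r / Q.derivative.eval r = 0 := by
  set s := Q.roots.toFinset
  have hs : s.val = Q.roots := by rw [Multiset.toFinset_val, Multiset.dedup_eq_self.mpr hnd]
  have hderiv : ∀ r ∈ s, Q.derivative.eval r = Q.leadingCoeff * ∏ j ∈ s.erase r, (r - j) := by
    intro r hr
    rw [hQ.eval_derivative_of_mem_roots (Multiset.mem_toFinset.mp hr), Finset.prod_eq_multiset_prod,
      Finset.erase_val, hs]
  have hcard : s.card = Q.natDegree := by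
    rw [Finset.card_def, hs, hQ.natDegree_eq_card_roots]
  calc ∑ r ∈ s, P.eval r / Q.derivative.eval r
      = Q.leadingCoeff⁻¹ * ∑ r ∈ s, P.eval r / ∏ j ∈ s.erase r, (r - j) := by
        rw [Finset.mul_sum]
        refine Finset.sum_congr rfl fun r hr => ?_
        rw [hderiv r hr, div_mul_eq_div_div_swap, div_eq_inv_mul (P.eval r / _)]
    _ = 0 := mul_eq_zero_of_right _ <|
        Lagrange.sum_eval_div_prod_sub_eq_zero (v := id) (Set.injOn_id _) (by omega)

theorem sum_residues_eq_zero_general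
    (P Q : Polynomial ℂ) (hsf : Squarefree Q)
    (hdeg : P = 0 ∨ P.natDegree + 2 ≤ Q.natDegree) :
    ∑ r ∈ Q.roots.toFinset, P.eval r / Q.derivative.eval r = 0 := by
  rcases hdeg with rfl | hdeg
  · simp
  exact (IsAlgClosed.splits Q).sum_eval_div_eval_derivative_eq_zero
    (nodup_roots (PerfectField.separable_iff_squarefree.mpr hsf)) hdeg

/-- **Univariate global residue theorem.**
If `Q ∈ ℂ[z]` is nonzero and squarefree, and `P = 0` or `deg P ≤ deg Q − 2`,
then the sum over the distinct roots `r` of `Q` of `P(r)/Q′(r)` vanishes. -/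
theorem sum_residues_eq_zero
    (P Q : Polynomial ℂ) (hQ : Q ≠ 0) (hsf : Squarefree Q)
    (hdeg : P = 0 ∨ P.natDegree + 2 ≤ Q.natDegree) :
    ∑ r ∈ Q.roots.toFinset, P.eval r / Q.derivative.eval r = 0 :=
  sum_residues_eq_zero_general P Q hsf hdeg
end

section
/- Let χ be a nonzero complex number and let I be the ideal of ℂ[z₁,z₂] generated by z₁²(z₂−1) and (χz₁+1)²z₂³. Then I equals the ideal of ℂ[z₁,z₂] generated by the four polynomials z₁²z₂ − z₁², −2χ³z₁³ − 3χ²z₁² + z₂³, z₂⁴ − z₂³, and 2χz₁z₂³ + χ²z₁² + z₂³. -/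
open MvPolynomial

/-! Each generator on either side is an explicit combination of the generators on the other
side. These are polynomial identities in `c, x, y`, so the equality holds in every commutative
ring; the theorem is the case `c = χ, x = z₁, y = z₂`. -/

theorem Ideal.mem_span_four_of_eq {R : Type*} [CommRing R] {a b c d x : R}
    (p q r s : R) (h : x = p * a + q * b + r * c + s * d) :
    x ∈ Ideal.span ({a, b, c, d} : Set R) := by
  have mem : ∀ {g}, g ∈ ({a, b, c, d} : Set R) → g ∈ Ideal.span ({a, b, c, d} : Set R) :=
    fun hg => Ideal.subset_span hg
  rw [h]
  refine add_mem (add_mem (add_mem ?_ ?_) ?_) ?_ <;> refine Ideal.mul_mem_left _ _ (mem ?_) <;>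
    simp

theorem Ideal.span_pair_eq_span_groebner {R : Type*} [CommRing R] (c x y : R) :
    Ideal.span ({x ^ 2 * (y - 1), (c * x + 1) ^ 2 * y ^ 3} : Set R) =
    Ideal.span ({x ^ 2 * y - x ^ 2, -(2 * c ^ 3) * x ^ 3 - 3 * c ^ 2 * x ^ 2 + y ^ 3,
      y ^ 4 - y ^ 3, 2 * c * x * y ^ 3 + c ^ 2 * x ^ 2 + y ^ 3} : Set R) := by
  apply le_antisymm <;> rw [Ideal.span_le] <;> intro f hf <;>
    simp only [Set.mem_insert_iff, Set.mem_singleton_iff] at hf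
  · rcases hf with rfl | rfl
    · exact Ideal.mem_span_four_of_eq 1 0 0 0 (by ring)
    · exact Ideal.mem_span_four_of_eq (c ^ 2 * (y ^ 2 + y + 1)) 0 0 1 (by ring)
  · rcases hf with rfl | rfl | rfl | rfl <;> rw [SetLike.mem_coe, Ideal.mem_span_pair]
    · exact ⟨1, 0, by ring⟩
    · exact ⟨(2 * c ^ 3 * x + 3 * c ^ 2) * (y ^ 2 + y + 1), 1 - 2 * c * x, by ring⟩
    · exact ⟨(2 * c ^ 3 * x + 3 * c ^ 2) * y ^ 3, (1 - 2 * c * x) * (y - 1), by ring⟩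
    · exact ⟨-(c ^ 2 * (y ^ 2 + y + 1)), 1, by ring⟩

theorem ideal_eq_groebner_ideal_general (χ : ℂ) :
    Ideal.span ({(X 0) ^ 2 * (X 1 - 1),
        (C χ * X 0 + 1) ^ 2 * (X 1) ^ 3} : Set (MvPolynomial (Fin 2) ℂ)) =
    Ideal.span ({(X 0) ^ 2 * X 1 - (X 0) ^ 2,
        - C (2 * χ ^ 3) * (X 0) ^ 3 - C (3 * χ ^ 2) * (X 0) ^ 2 + (X 1) ^ 3,
        (X 1) ^ 4 - (X 1) ^ 3,
        C (2 * χ) * X 0 * (X 1) ^ 3 + C (χ ^ 2) * (X 0) ^ 2 + (X 1) ^ 3} :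
      Set (MvPolynomial (Fin 2) ℂ)) := by
  simpa only [map_mul, map_pow, map_ofNat] using
    Ideal.span_pair_eq_span_groebner (C χ) (X 0) (X 1)

/-- The ideal of `ℂ[z₁,z₂]` generated by `z₁²(z₂−1)` and `(χz₁+1)²z₂³` (with `χ ≠ 0`)
equals the ideal generated by the four Gröbner-basis polynomials
`z₁²z₂ − z₁²`, `−2χ³z₁³ − 3χ²z₁² + z₂³`, `z₂⁴ − z₂³`, `2χz₁z₂³ + χ²z₁² + z₂³`. -/
theorem ideal_eq_groebner_ideal (χ : ℂ) (hχ : χ ≠ 0) :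
    Ideal.span ({(X 0) ^ 2 * (X 1 - 1),
        (C χ * X 0 + 1) ^ 2 * (X 1) ^ 3} : Set (MvPolynomial (Fin 2) ℂ)) =
    Ideal.span ({(X 0) ^ 2 * X 1 - (X 0) ^ 2,
        - C (2 * χ ^ 3) * (X 0) ^ 3 - C (3 * χ ^ 2) * (X 0) ^ 2 + (X 1) ^ 3,
        (X 1) ^ 4 - (X 1) ^ 3,
        C (2 * χ) * X 0 * (X 1) ^ 3 + C (χ ^ 2) * (X 0) ^ 2 + (X 1) ^ 3} :
      Set (MvPolynomial (Fin 2) ℂ)) :=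
  ideal_eq_groebner_ideal_general χ
end

section
/- Let χ be a nonzero complex number. In ℂ[z₁,z₂], the intersection of the ideal generated by z₁ and z₂ with the ideal generated by z₁ + 1/χ and z₂ − 1 equals the ideal generated by z₁ + z₂/χ and z₂² − z₂. -/
/-! The two ideals are comaximal, since `y - (y - 1) = 1`, so their intersection is their
product; the four products of generators reduce to `x + c y` and `y² - y`. -/

open MvPolynomial

section

variable {R : Type*} [CommRing R] (x y c : R)

theorem Ideal.span_pair_sup_span_add_sub_one_eq_top :
    Ideal.span {x, y} ⊔ Ideal.span {x + c, y - 1} = ⊤ := by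
  rw [Ideal.eq_top_iff_one, Submodule.mem_sup]
  exact ⟨y, Ideal.subset_span (by simp), -(y - 1), neg_mem (Ideal.subset_span (by simp)), by ring⟩

theorem Ideal.span_pair_mul_span_add_sub_one :
    Ideal.span {x, y} * Ideal.span {x + c, y - 1} = Ideal.span {x + c * y, y ^ 2 - y} := by
  apply le_antisymm
  · rw [Ideal.span_pair_mul_span_pair, Ideal.span_le]
    simp only [Set.insert_subset_iff, Set.singleton_subset_iff, SetLike.mem_coe,
      Ideal.mem_span_pair]
    exact ⟨⟨x - c * (y - 1), c * c, by ring⟩, ⟨y - 1, -c, by ring⟩, ⟨y, -c, by ring⟩,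
      ⟨0, 1, by ring⟩⟩
  · have mem_mul {a b : R} (ha : a ∈ ({x, y} : Set R)) (hb : b ∈ ({x + c, y - 1} : Set R)) :
        a * b ∈ Ideal.span {x, y} * Ideal.span {x + c, y - 1} :=
      Ideal.mul_mem_mul (Ideal.subset_span ha) (Ideal.subset_span hb)
    rw [Ideal.span_le, Set.insert_subset_iff, Set.singleton_subset_iff]
    constructor
    · rw [show x + c * y = y * (x + c) - x * (y - 1) by ring]
      exact sub_mem (mem_mul (by simp) (by simp)) (mem_mul (by simp) (by simp))
    · rw [sq, ← mul_sub_one]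
      exact mem_mul (by simp) (by simp)

end

theorem inf_vanishing_ideals_eq_general (χ : ℂ) :
    Ideal.span ({X 0, X 1} : Set (MvPolynomial (Fin 2) ℂ)) ⊓
      Ideal.span ({X 0 + C (1 / χ), X 1 - 1} : Set (MvPolynomial (Fin 2) ℂ)) =
    Ideal.span ({X 0 + C (1 / χ) * X 1, (X 1) ^ 2 - X 1} :
      Set (MvPolynomial (Fin 2) ℂ)) := by
  rw [← Ideal.mul_eq_inf_of_coprime (Ideal.span_pair_sup_span_add_sub_one_eq_top _ _ _),
    Ideal.span_pair_mul_span_add_sub_one]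

/-- In `ℂ[z₁,z₂]` (with `χ ≠ 0`), the intersection of the ideal `⟨z₁, z₂⟩` with the
ideal `⟨z₁ + 1/χ, z₂ − 1⟩` equals the ideal `⟨z₁ + z₂/χ, z₂² − z₂⟩`. -/
theorem inf_vanishing_ideals_eq (χ : ℂ) (hχ : χ ≠ 0) :
    Ideal.span ({X 0, X 1} : Set (MvPolynomial (Fin 2) ℂ)) ⊓
      Ideal.span ({X 0 + C (1 / χ), X 1 - 1} : Set (MvPolynomial (Fin 2) ℂ)) =
    Ideal.span ({X 0 + C (1 / χ) * X 1, (X 1) ^ 2 - X 1} :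
      Set (MvPolynomial (Fin 2) ℂ)) :=
  inf_vanishing_ideals_eq_general χ
end

section
/- Let χ be a nonzero complex number and let I be the ideal of ℂ[z₁,z₂] generated by z₁²(z₂−1) and (χz₁+1)²z₂³. Define e₁ = 1 − z₂³ and e₂ = z₂³ in ℂ[z₁,z₂]. Then: (i) e₁ + e₂ = 1; (ii) e₁·e₂ ∈ I; (iii) e₁² − e₁ ∈ I and e₂² − e₂ ∈ I; and (iv) e₁(0,0) = 1, e₁(−1/χ,1) = 0, e₂(0,0) = 0, e₂(−1/χ,1) = 1. -/
open MvPolynomial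

/-! Over `ℂ[z₁]` the generators' coefficients `z₁²` and `(χz₁+1)²` are coprime, with the explicit
Bézout identity `χ²(2χz₁+3)·z₁² + (1−2χz₁)·(χz₁+1)² = 1`; multiplying it by `z₂³(z₂−1)` puts
`z₂³(z₂−1)`, hence `e₁e₂ = −(z₂²+z₂+1)·z₂³(z₂−1)`, in `I`. Since `e₁ + e₂ = 1`, both `e_i² − e_i`
equal `−e₁e₂`. -/

theorem sq_sub_self_mem_of_add_eq_one {R : Type*} [CommRing R] {I : Ideal R} {e f : R}
    (hsum : e + f = 1) (hmul : e * f ∈ I) : e ^ 2 - e ∈ I := by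
  have : e ^ 2 - e = -(e * f) := by linear_combination e * hsum
  exact this ▸ I.neg_mem hmul

theorem one_sub_cube_mul_cube_mem_span {R : Type*} [CommRing R] (c x y : R) :
    (1 - y ^ 3) * y ^ 3 ∈ Ideal.span {x ^ 2 * (y - 1), (c * x + 1) ^ 2 * y ^ 3} := by
  have bezout : c ^ 2 * (2 * c * x + 3) * x ^ 2 + (1 - 2 * c * x) * (c * x + 1) ^ 2 = 1 := by
    ring
  rw [Ideal.mem_span_pair]
  exact ⟨-(y ^ 2 + y + 1) * y ^ 3 * c ^ 2 * (2 * c * x + 3),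
    -(y ^ 2 + y + 1) * (y - 1) * (1 - 2 * c * x),
    by linear_combination -(y ^ 2 + y + 1) * y ^ 3 * (y - 1) * bezout⟩

theorem partition_of_unity_example_general (χ : ℂ)
    (I : Ideal (MvPolynomial (Fin 2) ℂ))
    (hI : I = Ideal.span {(X 0) ^ 2 * (X 1 - 1), (C χ * X 0 + 1) ^ 2 * (X 1) ^ 3})
    (e₁ e₂ : MvPolynomial (Fin 2) ℂ)
    (he₁ : e₁ = 1 - (X 1) ^ 3) (he₂ : e₂ = (X 1) ^ 3) :
    e₁ + e₂ = 1 ∧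
    e₁ * e₂ ∈ I ∧
    (e₁ ^ 2 - e₁ ∈ I ∧ e₂ ^ 2 - e₂ ∈ I) ∧
    (eval ![0, 0] e₁ = 1 ∧ eval ![-(1 / χ), 1] e₁ = 0 ∧
     eval ![0, 0] e₂ = 0 ∧ eval ![-(1 / χ), 1] e₂ = 1) := by
  subst hI he₁ he₂
  have hsum : (1 - X 1 ^ 3) + X 1 ^ 3 = (1 : MvPolynomial (Fin 2) ℂ) := sub_add_cancel _ _
  have hmul := one_sub_cube_mul_cube_mem_span (C χ) (X 0) (X 1 : MvPolynomial (Fin 2) ℂ)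
  refine ⟨hsum, hmul, ⟨sq_sub_self_mem_of_add_eq_one hsum hmul, ?_⟩, by simp⟩
  exact sq_sub_self_mem_of_add_eq_one ((add_comm _ _).trans hsum)
    (by rw [mul_comm (X 1 ^ 3)]; exact hmul)

/-- With `I = ⟨z₁²(z₂−1), (χz₁+1)²z₂³⟩` in `ℂ[z₁,z₂]` (`χ ≠ 0`), the polynomials
`e₁ = 1 − z₂³` and `e₂ = z₂³` form a partition of unity modulo `I`:
(i) `e₁ + e₂ = 1`; (ii) `e₁e₂ ∈ I`; (iii) `e₁² − e₁ ∈ I` and `e₂² − e₂ ∈ I`;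
(iv) `e₁(0,0) = 1`, `e₁(−1/χ,1) = 0`, `e₂(0,0) = 0`, `e₂(−1/χ,1) = 1`. -/
theorem partition_of_unity_example (χ : ℂ) (hχ : χ ≠ 0)
    (I : Ideal (MvPolynomial (Fin 2) ℂ))
    (hI : I = Ideal.span {(X 0) ^ 2 * (X 1 - 1), (C χ * X 0 + 1) ^ 2 * (X 1) ^ 3})
    (e₁ e₂ : MvPolynomial (Fin 2) ℂ)
    (he₁ : e₁ = 1 - (X 1) ^ 3) (he₂ : e₂ = (X 1) ^ 3) :
    e₁ + e₂ = 1 ∧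
    e₁ * e₂ ∈ I ∧
    (e₁ ^ 2 - e₁ ∈ I ∧ e₂ ^ 2 - e₂ ∈ I) ∧
    (eval ![0, 0] e₁ = 1 ∧ eval ![-(1 / χ), 1] e₁ = 0 ∧
     eval ![0, 0] e₂ = 0 ∧ eval ![-(1 / χ), 1] e₂ = 1) :=
  partition_of_unity_example_general χ I hI e₁ e₂ he₁ he₂
end

section
/- Let χ be a nonzero complex number and let I be the ideal of ℂ[z₁,z₂] generated by z₁²(z₂−1) and (χz₁+1)²z₂³. Then the residue classes in ℂ[z₁,z₂]/I of the eight monomials z₁z₂², z₂³, z₁², z₁z₂, z₂², z₁, z₂, 1 form a basis of ℂ[z₁,z₂]/I as a ℂ-vector space; in particular, the quotient ring ℂ[z₁,z₂]/I has dimension 8 over ℂ. -/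
open MvPolynomial

set_option maxHeartbeats 4000000 in
/-- With `I = ⟨z₁²(z₂−1), (χz₁+1)²z₂³⟩` in `ℂ[z₁,z₂]` (`χ ≠ 0`), the residue
classes of the eight monomials `z₁z₂², z₂³, z₁², z₁z₂, z₂², z₁, z₂, 1` form a
`ℂ`-basis of the quotient ring `ℂ[z₁,z₂]/I`; in particular the quotient has
dimension `8` over `ℂ`. -/
theorem quotient_basis_example (χ : ℂ) (hχ : χ ≠ 0)
    (I : Ideal (MvPolynomial (Fin 2) ℂ))
    (hI : I = Ideal.span {(X 0) ^ 2 * (X 1 - 1), (C χ * X 0 + 1) ^ 2 * (X 1) ^ 3}) :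
    (∃ b : Module.Basis (Fin 8) ℂ (MvPolynomial (Fin 2) ℂ ⧸ I),
      ∀ i, b i = Ideal.Quotient.mk I
        (![X 0 * (X 1) ^ 2, (X 1) ^ 3, (X 0) ^ 2, X 0 * X 1, (X 1) ^ 2,
           X 0, X 1, 1] i)) ∧
    Module.finrank ℂ (MvPolynomial (Fin 2) ℂ ⧸ I) = 8 := by
  have hmem : ∀ p : MvPolynomial (Fin 2) ℂ,
      (∃ u w : MvPolynomial (Fin 2) ℂ,
        u * ((X 0) ^ 2 * (X 1 - 1)) + w * ((C χ * X 0 + 1) ^ 2 * (X 1) ^ 3) = p) → p ∈ I := by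
    intro p hp; rw [hI]; exact Ideal.mem_span_pair.2 hp
  have hmem' : ∀ p : MvPolynomial (Fin 2) ℂ, p ∈ I →
      ∃ u w : MvPolynomial (Fin 2) ℂ,
        u * ((X 0) ^ 2 * (X 1 - 1)) + w * ((C χ * X 0 + 1) ^ 2 * (X 1) ^ 3) = p := by
    intro p hp; rw [hI] at hp; exact Ideal.mem_span_pair.1 hp
  have hsmul : ∀ (c : ℂ) (p : MvPolynomial (Fin 2) ℂ),
      c • Ideal.Quotient.mk I p = Ideal.Quotient.mk I (C c * p) := fun c p => by
    rw [← smul_eq_C_mul, ← Ideal.Quotient.mkₐ_eq_mk ℂ, map_smul]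
  let mat : Fin 8 → MvPolynomial (Fin 2) ℂ :=
    ![X 0 * (X 1) ^ 2, (X 1) ^ 3, (X 0) ^ 2, X 0 * X 1, (X 1) ^ 2, X 0, X 1, 1]
  let v : Fin 8 → (MvPolynomial (Fin 2) ℂ ⧸ I) := fun i => Ideal.Quotient.mk I (mat i)
  let M : Submodule ℂ (MvPolynomial (Fin 2) ℂ ⧸ I) := Submodule.span ℂ (Set.range v)
  -- basic membership facts
  have hv : ∀ i : Fin 8, v i ∈ M := fun i => Submodule.subset_span ⟨i, rfl⟩
  -- nontrivial congruence: x²y ≡ x²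
  have hA : Ideal.Quotient.mk I (X 0 * X 1 * X 0) = v 2 := by
    rw [show v 2 = Ideal.Quotient.mk I ((X 0 : MvPolynomial (Fin 2) ℂ) ^ 2) from rfl,
      Ideal.Quotient.eq]
    exact hmem _ ⟨1, 0, by ring⟩
  have hA' : Ideal.Quotient.mk I ((X 0 : MvPolynomial (Fin 2) ℂ) ^ 2 * X 1) = v 2 := by
    rw [show v 2 = Ideal.Quotient.mk I ((X 0 : MvPolynomial (Fin 2) ℂ) ^ 2) from rfl,
      Ideal.Quotient.eq]
    exact hmem _ ⟨1, 0, by ring⟩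
  -- x²y² ≡ x²
  have hB : Ideal.Quotient.mk I (X 0 * X 1 ^ 2 * X 0) = v 2 := by
    rw [show v 2 = Ideal.Quotient.mk I ((X 0 : MvPolynomial (Fin 2) ℂ) ^ 2) from rfl,
      Ideal.Quotient.eq]
    exact hmem _ ⟨X 1 + 1, 0, by ring⟩
  -- y⁴ ≡ y³
  have hC : Ideal.Quotient.mk I ((X 1 : MvPolynomial (Fin 2) ℂ) ^ 3 * X 1) = v 1 := by
    rw [show v 1 = Ideal.Quotient.mk I ((X 1 : MvPolynomial (Fin 2) ℂ) ^ 3) from rfl,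
      Ideal.Quotient.eq]
    refine hmem _ ⟨C (χ ^ 2) * (3 + C (2 * χ) * X 0) * X 1 ^ 3,
      (X 1 - 1) * (1 - C (2 * χ) * X 0), ?_⟩
    simp only [map_mul, map_pow, map_ofNat]
    ring
  -- xy³ : (2χ) • mk(xy³) = -v1 - χ² v2
  have hD : ∀ p : MvPolynomial (Fin 2) ℂ, p = X 1 ^ 3 * X 0 →
      Ideal.Quotient.mk I p ∈ M := by
    intro p hp
    rw [← Submodule.smul_mem_iff M (mul_ne_zero two_ne_zero hχ : (2 : ℂ) * χ ≠ 0), hsmul]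
    have key : Ideal.Quotient.mk I (C ((2 : ℂ) * χ) * p)
        = Ideal.Quotient.mk I (C (-1 : ℂ) * X 1 ^ 3 + C (-(χ ^ 2)) * X 0 ^ 2) := by
      rw [Ideal.Quotient.eq]
      refine hmem _ ⟨C (-(χ ^ 2)) * (X 1 ^ 2 + X 1 + 1), 1, ?_⟩
      simp only [map_mul, map_pow, map_neg, map_one, map_ofNat, hp]
      ring
    rw [key, map_add, ← hsmul, ← hsmul]
    exact Submodule.add_mem _ (Submodule.smul_mem _ _ (hv 1)) (Submodule.smul_mem _ _ (hv 2))
  -- x³ : (2χ³) • mk(x³) = v1 - 3χ² v2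
  have hE3 : Ideal.Quotient.mk I ((X 0 : MvPolynomial (Fin 2) ℂ) ^ 2 * X 0) ∈ M := by
    have h2 : (2 : ℂ) * χ ^ 3 ≠ 0 := mul_ne_zero two_ne_zero (pow_ne_zero _ hχ)
    rw [← Submodule.smul_mem_iff M h2, hsmul]
    have key : Ideal.Quotient.mk I (C ((2 : ℂ) * χ ^ 3) * ((X 0 : MvPolynomial (Fin 2) ℂ) ^ 2 * X 0))
        = Ideal.Quotient.mk I (C (1 : ℂ) * X 1 ^ 3 + C (-(3 * χ ^ 2)) * X 0 ^ 2) := by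
      rw [Ideal.Quotient.eq]
      refine hmem _ ⟨(X 1 ^ 2 + X 1 + 1) * (C (-(3 * χ ^ 2)) + C (-(2 * χ ^ 3)) * X 0),
        C (2 * χ) * X 0 - 1, ?_⟩
      simp only [map_mul, map_pow, map_neg, map_one, map_ofNat]
      ring
    rw [key, map_add, ← hsmul, ← hsmul]
    exact Submodule.add_mem _ (Submodule.smul_mem _ _ (hv 1)) (Submodule.smul_mem _ _ (hv 2))
  -- multiplication by X n preserves M
  have hmulx : ∀ z : MvPolynomial (Fin 2) ℂ ⧸ I, z ∈ M →
      z * Ideal.Quotient.mk I (X 0) ∈ M := by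
    intro z hz
    refine Submodule.span_induction ?_ ?_ ?_ ?_ hz
    · rintro _ ⟨i, rfl⟩
      fin_cases i
      · show Ideal.Quotient.mk I (X 0 * X 1 ^ 2) * Ideal.Quotient.mk I (X 0) ∈ M
        rw [← map_mul, hB]; exact hv 2
      · show Ideal.Quotient.mk I ((X 1) ^ 3) * Ideal.Quotient.mk I (X 0) ∈ M
        rw [← map_mul]; exact hD _ rfl
      · show Ideal.Quotient.mk I ((X 0) ^ 2) * Ideal.Quotient.mk I (X 0) ∈ M
        rw [← map_mul]; exact hE3
      · show Ideal.Quotient.mk I (X 0 * X 1) * Ideal.Quotient.mk I (X 0) ∈ M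
        rw [← map_mul, hA]; exact hv 2
      · show Ideal.Quotient.mk I ((X 1) ^ 2) * Ideal.Quotient.mk I (X 0) ∈ M
        rw [← map_mul,
          show Ideal.Quotient.mk I ((X 1 : MvPolynomial (Fin 2) ℂ) ^ 2 * X 0)
              = Ideal.Quotient.mk I (X 0 * (X 1) ^ 2) from congrArg _ (by ring)]
        exact hv 0
      · show Ideal.Quotient.mk I (X 0) * Ideal.Quotient.mk I (X 0) ∈ M
        rw [← map_mul,
          show Ideal.Quotient.mk I ((X 0 : MvPolynomial (Fin 2) ℂ) * X 0)
              = Ideal.Quotient.mk I ((X 0 : MvPolynomial (Fin 2) ℂ) ^ 2) from congrArg _ (by ring)]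
        exact hv 2
      · show Ideal.Quotient.mk I (X 1) * Ideal.Quotient.mk I (X 0) ∈ M
        rw [← map_mul,
          show Ideal.Quotient.mk I ((X 1 : MvPolynomial (Fin 2) ℂ) * X 0)
              = Ideal.Quotient.mk I (X 0 * X 1) from congrArg _ (by ring)]
        exact hv 3
      · show Ideal.Quotient.mk I 1 * Ideal.Quotient.mk I (X 0) ∈ M
        rw [← map_mul, one_mul]; exact hv 5
    · simp
    · intro x y _ _ hx hy; rw [add_mul]; exact Submodule.add_mem _ hx hy
    · intro c x _ hx; rw [smul_mul_assoc]; exact Submodule.smul_mem _ _ hx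
  have hmuly : ∀ z : MvPolynomial (Fin 2) ℂ ⧸ I, z ∈ M →
      z * Ideal.Quotient.mk I (X 1) ∈ M := by
    intro z hz
    refine Submodule.span_induction ?_ ?_ ?_ ?_ hz
    · rintro _ ⟨i, rfl⟩
      fin_cases i
      · show Ideal.Quotient.mk I (X 0 * X 1 ^ 2) * Ideal.Quotient.mk I (X 1) ∈ M
        rw [← map_mul]; exact hD _ (by ring)
      · show Ideal.Quotient.mk I ((X 1) ^ 3) * Ideal.Quotient.mk I (X 1) ∈ M
        rw [← map_mul, hC]; exact hv 1
      · show Ideal.Quotient.mk I ((X 0) ^ 2) * Ideal.Quotient.mk I (X 1) ∈ M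
        rw [← map_mul, hA']; exact hv 2
      · show Ideal.Quotient.mk I (X 0 * X 1) * Ideal.Quotient.mk I (X 1) ∈ M
        rw [← map_mul,
          show Ideal.Quotient.mk I ((X 0 : MvPolynomial (Fin 2) ℂ) * X 1 * X 1)
              = Ideal.Quotient.mk I (X 0 * (X 1) ^ 2) from congrArg _ (by ring)]
        exact hv 0
      · show Ideal.Quotient.mk I ((X 1) ^ 2) * Ideal.Quotient.mk I (X 1) ∈ M
        rw [← map_mul,
          show Ideal.Quotient.mk I ((X 1 : MvPolynomial (Fin 2) ℂ) ^ 2 * X 1)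
              = Ideal.Quotient.mk I ((X 1 : MvPolynomial (Fin 2) ℂ) ^ 3) from congrArg _ (by ring)]
        exact hv 1
      · show Ideal.Quotient.mk I (X 0) * Ideal.Quotient.mk I (X 1) ∈ M
        rw [← map_mul]; exact hv 3
      · show Ideal.Quotient.mk I (X 1) * Ideal.Quotient.mk I (X 1) ∈ M
        rw [← map_mul,
          show Ideal.Quotient.mk I ((X 1 : MvPolynomial (Fin 2) ℂ) * X 1)
              = Ideal.Quotient.mk I ((X 1 : MvPolynomial (Fin 2) ℂ) ^ 2) from congrArg _ (by ring)]
        exact hv 4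
      · show Ideal.Quotient.mk I 1 * Ideal.Quotient.mk I (X 1) ∈ M
        rw [← map_mul, one_mul]; exact hv 6
    · simp
    · intro x y _ _ hx hy; rw [add_mul]; exact Submodule.add_mem _ hx hy
    · intro c x _ hx; rw [smul_mul_assoc]; exact Submodule.smul_mem _ _ hx
  -- spanning
  have hspan' : ∀ p : MvPolynomial (Fin 2) ℂ, Ideal.Quotient.mk I p ∈ M := by
    intro p
    induction p using MvPolynomial.induction_on with
    | C c =>
        have : Ideal.Quotient.mk I (C c) = c • v 7 := by
          rw [show v 7 = Ideal.Quotient.mk I (1 : MvPolynomial (Fin 2) ℂ) from rfl, hsmul, mul_one]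
        rw [this]
        exact Submodule.smul_mem _ _ (hv 7)
    | add p q hp hq => rw [map_add]; exact Submodule.add_mem _ hp hq
    | mul_X p n hp =>
        rw [map_mul]
        fin_cases n
        · exact hmulx _ hp
        · exact hmuly _ hp
  have hspan : ⊤ ≤ Submodule.span ℂ (Set.range v) := by
    intro z _
    obtain ⟨p, rfl⟩ := Ideal.Quotient.mk_surjective z
    exact hspan' p
  -- linear independence
  have hind : LinearIndependent ℂ v := by
    rw [Fintype.linearIndependent_iff]
    intro a ha
    have hsum : Ideal.Quotient.mk I (∑ i, C (a i) * mat i) = 0 := by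
      rw [map_sum]
      rw [← ha]
      exact Finset.sum_congr rfl fun i _ => (hsmul (a i) (mat i)).symm
    obtain ⟨u, w, hE⟩ := hmem' _ (Ideal.Quotient.eq_zero_iff_mem.1 hsum)
    have hE' : u * ((X 0) ^ 2 * (X 1 - 1)) + w * ((C χ * X 0 + 1) ^ 2 * (X 1) ^ 3)
        = C (a 0) * (X 0 * (X 1) ^ 2) + C (a 1) * (X 1) ^ 3 + C (a 2) * (X 0) ^ 2
        + C (a 3) * (X 0 * X 1) + C (a 4) * (X 1) ^ 2 + C (a 5) * (X 0)
        + C (a 6) * (X 1) + C (a 7) * 1 := by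
      rw [hE, Fin.sum_univ_eight]; rfl
    have h0 : a 0 = 0 := by
      have h := congrArg (fun p => eval (fun _ => (0:ℂ)) (pderiv 0 (pderiv 1 (pderiv 1 p)))) hE'
      simp [pderiv_mul, pderiv_X, Pi.single_apply, pow_two, pow_succ] at h
      linear_combination h
    have h3 : a 3 = 0 := by
      have h := congrArg (fun p => eval (fun _ => (0:ℂ)) (pderiv 0 (pderiv 1 p))) hE'
      simp [pderiv_mul, pderiv_X, Pi.single_apply, pow_two, pow_succ] at h
      linear_combination -h
    have h4 : a 4 = 0 := by
      have h := congrArg (fun p => eval (fun _ => (0:ℂ)) (pderiv 1 (pderiv 1 p))) hE'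
      simp [pderiv_mul, pderiv_X, Pi.single_apply, pow_two, pow_succ] at h
      linear_combination h
    have h5 : a 5 = 0 := by
      have h := congrArg (fun p => eval (fun _ => (0:ℂ)) (pderiv 0 p)) hE'
      simp [pderiv_mul, pderiv_X, Pi.single_apply, pow_two, pow_succ] at h
      linear_combination -h
    have h6 : a 6 = 0 := by
      have h := congrArg (fun p => eval (fun _ => (0:ℂ)) (pderiv 1 p)) hE'
      simp [pderiv_mul, pderiv_X, Pi.single_apply, pow_two, pow_succ] at h
      linear_combination -h
    have h7 : a 7 = 0 := by
      have h := congrArg (fun p => eval (fun _ => (0:ℂ)) p) hE'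
      simp at h
      linear_combination -h
    rw [h0, h3, h4, h5, h6, h7] at hE'
    simp only [map_zero, zero_mul, zero_add, add_zero, mul_one] at hE'
    have h2 : a 2 = 0 := by
      have h := congrArg (fun p => eval (fun i : Fin 2 => if i = 0 then -χ⁻¹ else 1) (pderiv 0 p)) hE'
      simp [pderiv_mul, pderiv_X, Pi.single_apply, pow_two, pow_succ] at h
      field_simp at h
      linear_combination (1/2 : ℂ) * h
    have h1 : a 1 = 0 := by
      have h := congrArg (fun p => eval (fun i : Fin 2 => if i = 0 then -χ⁻¹ else 1) p) hE'
      simp [pow_two, pow_succ, h2] at h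
      field_simp at h
      linear_combination -h
    intro i
    fin_cases i <;> assumption
  refine ⟨⟨Module.Basis.mk hind hspan, fun i => Module.Basis.mk_apply hind hspan i⟩, ?_⟩
  rw [Module.finrank_eq_card_basis (Module.Basis.mk hind hspan), Fintype.card_fin]
end
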